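/- arXiv:2208.05147 — 3 statements merged into one kernel-verified Lean document; each statement's English description precedes it below -/
import Mathlib

section
/- In a maximal position of the Game of Cycles played on a path (ignoring the sink–source rule at the two end vertices), if the two end edges of the path are directed in the same direction along the path, then the number of unmarkable edges is even; if the two end edges are directed in opposite directions, then the number of unmarkable edges is odd. -/
/-!
Along a legal position, two adjacent directed edges point the same way, since otherwise their
common internal vertex would be a sink or a source. An undirected edge is unmarkable exactly when
both its neighbours are directed and point in opposite directions, so undirected edges are isolated
and each one reverses the direction of travel. Walking from the first edge to the last, the
direction is therefore reversed once per undirected edge.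
-/

/-- Legality of a position on a path with edges `1, …, n` (edge `i` joins `v_{i-1}` to `v_i`;
`some true` means directed from `v_{i-1}` toward `v_i`, `some false` the reverse, `none`
undirected).  The sink–source rule is imposed only at the internal vertices `v_1, …, v_{n-1}`:
the vertex `v_i` between edges `i` and `i+1` may not have both incident edges directed into it
(a sink) nor both directed out of it (a source). -/
def PathLegal (n : ℕ) (pos : ℕ → Option Bool) : Prop :=
  ∀ i : ℕ, 1 ≤ i → i + 1 ≤ n →
    ¬(pos i = some true ∧ pos (i + 1) = some false) ∧
    ¬(pos i = some false ∧ pos (i + 1) = some true)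

def PathUnmarkable (n : ℕ) (pos : ℕ → Option Bool) (i : ℕ) : Prop :=
  ∀ b : Bool, ¬ PathLegal n (Function.update pos i (some b))

def undirectedCount (pos : ℕ → Option Bool) (k : ℕ) : ℕ :=
  ((Finset.Icc 1 k).filter fun i => pos i = none).card

lemma undirectedCount_succ (pos : ℕ → Option Bool) (k : ℕ) :
    undirectedCount pos (k + 1) = undirectedCount pos k + if pos (k + 1) = none then 1 else 0 := by
  simp only [undirectedCount, Finset.card_filter]
  exact Finset.sum_Icc_succ_top (by omega) _

namespace PathLegal

variable {n : ℕ} {pos : ℕ → Option Bool}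

lemma eq_of_ne_none (h : PathLegal n pos) {i : ℕ} (hi : 1 ≤ i) (hin : i + 1 ≤ n)
    (hpos : pos i ≠ none) (hnext : pos (i + 1) ≠ none) : pos i = pos (i + 1) := by
  obtain ⟨b, hb⟩ := Option.ne_none_iff_exists'.mp hpos
  obtain ⟨c, hc⟩ := Option.ne_none_iff_exists'.mp hnext
  have := h i hi hin
  cases b <;> cases c <;> simp_all

lemma update (h : PathLegal n pos) {i : ℕ} (b : Bool)
    (hprev : 1 ≤ i → pos i ≠ some !b) (hnext : i + 2 ≤ n → pos (i + 2) ≠ some !b) :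
    PathLegal n (Function.update pos (i + 1) (some b)) := by
  intro j hj hjn
  simp only [Function.update_apply]
  split_ifs with hj1 hj2 hj2
  · omega
  · have := hnext (by omega)
    subst hj1
    cases b <;> simp_all
  · have := hprev (by omega)
    obtain rfl : j = i := by omega
    cases b <;> simp_all
  · exact h j hj hjn

lemma neighbors_of_unmarkable (h : PathLegal n pos) {i : ℕ}
    (hu : PathUnmarkable n pos (i + 1)) :
    1 ≤ i ∧ i + 2 ≤ n ∧ ∃ b, pos i = some b ∧ pos (i + 2) = some !b := by
  have forced (b : Bool) : (1 ≤ i ∧ pos i = some !b) ∨ (i + 2 ≤ n ∧ pos (i + 2) = some !b) := by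
    by_contra! hfree
    exact hu b (h.update b hfree.1 hfree.2)
  rcases forced true with ⟨hi, hT⟩ | ⟨hi, hT⟩ <;>
    rcases forced false with ⟨hi', hF⟩ | ⟨hi', hF⟩ <;> simp_all

end PathLegal

lemma eq_first_iff_even_undirectedCount {n : ℕ} {pos : ℕ → Option Bool}
    (hlegal : PathLegal n pos) (hfirst : pos 1 ≠ none)
    (hmax : ∀ i, 1 ≤ i → i ≤ n → pos i = none → PathUnmarkable n pos i) :
    ∀ k, 1 ≤ k → k ≤ n → pos k ≠ none → (pos k = pos 1 ↔ Even (undirectedCount pos k)) := by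
  refine Nat.twoStepInduction (by omega) (fun _ _ _ => ?_) fun k ihk ihk1 hk hkn hpos => ?_
  · simp [undirectedCount, Finset.filter_singleton, hfirst]
  by_cases hprev : pos (k + 1) = none
  · obtain ⟨hk1, -, b, hb, hb'⟩ :=
      hlegal.neighbors_of_unmarkable (hmax (k + 1) (by omega) (by omega) hprev)
    rw [undirectedCount_succ, undirectedCount_succ, if_pos hprev, if_neg hpos, add_zero,
      Nat.even_add_one, ← ihk hk1 (by omega) (by simp [hb]), hb, hb']
    obtain ⟨a, ha⟩ := Option.ne_none_iff_exists'.mp hfirst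
    cases a <;> cases b <;> simp [ha]
  · rw [undirectedCount_succ, if_neg hpos, add_zero,
      ← hlegal.eq_of_ne_none (by omega) hkn hprev hpos]
    exact ihk1 (by omega) (by omega) hprev

/-- In a maximal position of the Game of Cycles on a path with `n ≥ 2` edges (end vertices
exempt from the sink–source rule): both end edges are directed, the position is legal, and
every undirected edge is unmarkable.  Then the number of unmarkable (undirected) edges is even
if the two end edges are directed the same way along the path, and odd if they are directed
in opposite directions. -/
theorem path_unmarkable_parity (n : ℕ) (hn : 2 ≤ n) (pos : ℕ → Option Bool)
    (hlegal : PathLegal n pos)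
    (hend1 : pos 1 ≠ none) (hendn : pos n ≠ none)
    (hmax : ∀ i : ℕ, 1 ≤ i → i ≤ n → pos i = none →
      ∀ b : Bool, ¬ PathLegal n (Function.update pos i (some b))) :
    (pos 1 = pos n →
      Even (((Finset.Icc 1 n).filter fun i => pos i = none).card)) ∧
    (pos 1 ≠ pos n →
      Odd (((Finset.Icc 1 n).filter fun i => pos i = none).card)) := by
  have key := eq_first_iff_even_undirectedCount hlegal hend1 hmax n (by omega) le_rfl hendn
  rw [eq_comm] at key
  exact ⟨key.mp, fun hne => Nat.not_even_iff_odd.mp (mt key.mpr hne)⟩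
end

section
/- In any maximal position of the Game of Cycles on a cycle graph C_n (a polygon with n ≥ 3 edges), the number of unmarkable edges is even. -/
/-- Legality of a position on the cycle graph `C_n`: edges are indexed by `0, …, n-1`,
edge `i` joining vertex `v_i` to `v_{(i+1) % n}`; `some true` means directed from `v_i`
toward `v_{(i+1) % n}`, `some false` the reverse, `none` undirected.  No vertex may be a sink
(both incident edges directed into it) or a source (both directed out of it). -/
def CycleLegal (n : ℕ) (pos : ℕ → Option Bool) : Prop :=
  ∀ i : ℕ, i < n →
    ¬(pos ((i + n - 1) % n) = some true ∧ pos i = some false) ∧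
    ¬(pos ((i + n - 1) % n) = some false ∧ pos i = some true)

/-!
Give every undirected edge the direction of the next edge. In a legal position adjacent directed
edges point the same way, and an unmarkable edge lies between two directed edges pointing opposite
ways, so in a maximal position this extended direction changes exactly at the undirected edges.
A two-valued function on a cycle changes value an even number of times.
-/

theorem Finset.even_card_filter_ne_comp {α : Type*} (s : Finset α) {σ : α → α}
    (hσ : Set.BijOn σ s s) (f : α → Bool) :
    Even (s.filter fun x => f x ≠ f (σ x)).card := by
  let g : α → ZMod 2 := fun x => (f x).toNat
  have hxor : ∀ x, ((if f x ≠ f (σ x) then 1 else 0 : ℕ) : ZMod 2) = g x + g (σ x) := by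
    intro x
    simp only [g]
    cases f x <;> cases f (σ x) <;> decide
  have hperm : ∑ x ∈ s, g (σ x) = ∑ x ∈ s, g x :=
    Finset.sum_nbij σ hσ.mapsTo hσ.injOn hσ.surjOn fun _ _ => rfl
  rw [even_iff_two_dvd, ← ZMod.natCast_eq_zero_iff, Finset.card_filter, Nat.cast_sum]
  simp only [hxor, Finset.sum_add_distrib, hperm, CharTwo.add_self_eq_zero]

def cyclePred (n i : ℕ) : ℕ := (i + n - 1) % n

def cycleSucc (n i : ℕ) : ℕ := (i + 1) % n

section CycleIndex

variable {n i : ℕ}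

theorem cyclePred_eq (hi : i < n) : cyclePred n i = if i = 0 then n - 1 else i - 1 := by
  unfold cyclePred
  split_ifs with h
  · rw [h, zero_add]; exact Nat.mod_eq_of_lt (by omega)
  · rw [show i + n - 1 = i - 1 + n by omega, Nat.add_mod_right, Nat.mod_eq_of_lt (by omega)]

theorem cycleSucc_eq (hi : i < n) : cycleSucc n i = if i + 1 = n then 0 else i + 1 := by
  unfold cycleSucc
  split_ifs with h
  · rw [h, Nat.mod_self]
  · exact Nat.mod_eq_of_lt (by omega)

theorem cyclePred_lt (hi : i < n) : cyclePred n i < n := Nat.mod_lt _ (by omega)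

theorem cycleSucc_lt (hi : i < n) : cycleSucc n i < n := Nat.mod_lt _ (by omega)

theorem cycleSucc_cyclePred (hi : i < n) : cycleSucc n (cyclePred n i) = i := by
  rw [cycleSucc_eq (cyclePred_lt hi), cyclePred_eq hi]
  grind

theorem cyclePred_cycleSucc (hi : i < n) : cyclePred n (cycleSucc n i) = i := by
  rw [cyclePred_eq (cycleSucc_lt hi), cycleSucc_eq hi]
  grind

theorem bijOn_cyclePred : Set.BijOn (cyclePred n) (Finset.range n) (Finset.range n) := by
  simp only [Finset.coe_range]
  exact Set.InvOn.bijOn ⟨fun _ hi => cycleSucc_cyclePred hi, fun _ hi => cyclePred_cycleSucc hi⟩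
    (fun _ => cyclePred_lt) (fun _ => cycleSucc_lt)

end CycleIndex

def CycleUnmarkable (n : ℕ) (pos : ℕ → Option Bool) (i : ℕ) : Prop :=
  ∀ b : Bool, ¬ CycleLegal n (Function.update pos i (some b))

def edgeDir (n : ℕ) (pos : ℕ → Option Bool) (i : ℕ) : Bool :=
  (pos i).getD ((pos (cycleSucc n i)).getD false)

section Position

variable {n i : ℕ} {pos : ℕ → Option Bool}

theorem cycleLegal_iff : CycleLegal n pos ↔
    ∀ j < n, ∀ c d, pos (cyclePred n j) = some c → pos j = some d → c = d := by
  refine forall₂_congr fun j _ => ?_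
  unfold cyclePred
  generalize pos ((j + n - 1) % n) = p
  generalize pos j = q
  rcases p with _ | _ | _ <;> rcases q with _ | _ | _ <;> simp

theorem CycleLegal.pred_or_succ_eq_of_not_cycleLegal_update (hlegal : CycleLegal n pos)
    {b : Bool} (hb : ¬ CycleLegal n (Function.update pos i (some b))) :
    pos (cyclePred n i) = some !b ∨ pos (cycleSucc n i) = some !b := by
  simp only [cycleLegal_iff, not_forall] at hb
  obtain ⟨j, hj, c, d, hc, hd, hcd⟩ := hb
  by_cases hji : j = i <;> by_cases hpj : cyclePred n j = i
  · subst hji; simp_all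
  · subst hji
    rw [Function.update_of_ne hpj] at hc
    obtain rfl : b = d := by simpa using hd
    exact .inl (hc.trans (congrArg some (Bool.eq_not_iff.2 hcd)))
  · rw [← hpj, cycleSucc_cyclePred hj]
    rw [Function.update_of_ne hji] at hd
    obtain rfl : b = c := by simpa [hpj] using hc
    exact .inr (hd.trans (congrArg some (Bool.eq_not_iff.2 (Ne.symm hcd))))
  · rw [Function.update_of_ne hji] at hd
    rw [Function.update_of_ne hpj] at hc
    exact absurd (cycleLegal_iff.1 hlegal j hj c d hc hd) hcd

theorem CycleLegal.exists_pred_succ_of_cycleUnmarkable (hlegal : CycleLegal n pos)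
    (hunm : CycleUnmarkable n pos i) :
    ∃ c, pos (cyclePred n i) = some c ∧ pos (cycleSucc n i) = some !c := by
  have htrue := hlegal.pred_or_succ_eq_of_not_cycleLegal_update (hunm true)
  have hfalse := hlegal.pred_or_succ_eq_of_not_cycleLegal_update (hunm false)
  rcases htrue with hp | hs <;> rcases hfalse with hp' | hs'
  · cases hp.symm.trans hp'
  · exact ⟨false, hp, hs'⟩
  · exact ⟨true, hp', hs⟩
  · cases hs.symm.trans hs'

theorem CycleLegal.eq_none_iff_edgeDir_ne (hlegal : CycleLegal n pos) (hi : i < n)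
    (hunm : pos i = none → CycleUnmarkable n pos i) :
    pos i = none ↔ edgeDir n pos i ≠ edgeDir n pos (cyclePred n i) := by
  cases hpi : pos i with
  | none =>
    obtain ⟨c, hp, hs⟩ := hlegal.exists_pred_succ_of_cycleUnmarkable (hunm hpi)
    simp [edgeDir, hpi, hp, hs]
  | some d =>
    suffices edgeDir n pos (cyclePred n i) = d by rw [this]; simp [edgeDir, hpi]
    cases hp : pos (cyclePred n i) with
    | none => simp [edgeDir, hp, cycleSucc_cyclePred hi, hpi]
    | some c => simpa [edgeDir, hp] using cycleLegal_iff.1 hlegal i hi c d hp hpi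

end Position

theorem cycle_unmarkable_even_general (n : ℕ) (pos : ℕ → Option Bool)
    (hlegal : CycleLegal n pos)
    (hmax : ∀ i : ℕ, i < n → pos i = none →
      ∀ b : Bool, ¬ CycleLegal n (Function.update pos i (some b))) :
    Even (((Finset.range n).filter fun i => pos i = none).card) := by
  have hundirected : ((Finset.range n).filter fun i => pos i = none) =
      (Finset.range n).filter fun i => edgeDir n pos i ≠ edgeDir n pos (cyclePred n i) :=
    Finset.filter_congr fun i hi =>
      have hi : i < n := Finset.mem_range.1 hi
      hlegal.eq_none_iff_edgeDir_ne hi (hmax i hi)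
  rw [hundirected]
  exact (Finset.range n).even_card_filter_ne_comp bijOn_cyclePred (edgeDir n pos)

/-- In any maximal position of the Game of Cycles on the polygon `C_n` (`n ≥ 3`) — a legal
position in which every undirected edge is unmarkable, i.e. directing it either way would
create a sink or a source — the number of unmarkable edges is even. -/
theorem cycle_unmarkable_even (n : ℕ) (hn : 3 ≤ n) (pos : ℕ → Option Bool)
    (hlegal : CycleLegal n pos)
    (hmax : ∀ i : ℕ, i < n → pos i = none →
      ∀ b : Bool, ¬ CycleLegal n (Function.update pos i (some b))) :
    Even (((Finset.range n).filter fun i => pos i = none).card) :=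
  cycle_unmarkable_even_general n pos hlegal hmax
end

section
/- On the gameboard consisting of a triangle b, c, d together with a pendant edge from b to a vertex a of degree 1 (4 edges total, an even number), Player 1 has a winning strategy: after Player 1 directs the edge from c to d, the edge ab is unmarkable, and Player 1 wins. Hence the parity conjecture (Player 2 wins all even-edge gameboards) fails for gameboards with a degree-1 vertex. -/
/-- The gameboard with vertices `a, b, c, d` and the four edges
`0 = ab, 1 = bc, 2 = bd, 3 = cd` (a triangle `bcd` with a pendant edge `ab`; `a` has
degree 1).  Reference directions: `some true` on edge `0,1,2,3` means `a→b, b→c, b→d, c→d`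
respectively; `some false` the reverse; `none` undirected.  A position is legal iff no
vertex is a sink (all incident edges directed inward) or a source (all outward). -/
def PendantLegal (pos : Fin 4 → Option Bool) : Prop :=
  -- vertex a (degree 1): its single edge directed either way makes a sink or a source
  ¬(pos 0 = some false) ∧ ¬(pos 0 = some true) ∧
  -- vertex b
  ¬(pos 0 = some true ∧ pos 1 = some false ∧ pos 2 = some false) ∧
  ¬(pos 0 = some false ∧ pos 1 = some true ∧ pos 2 = some true) ∧
  -- vertex c
  ¬(pos 1 = some true ∧ pos 3 = some false) ∧
  ¬(pos 1 = some false ∧ pos 3 = some true) ∧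
  -- vertex d
  ¬(pos 2 = some true ∧ pos 3 = some true) ∧
  ¬(pos 2 = some false ∧ pos 3 = some false)

/-- The unique cycle cell, the triangle `b c d`, is coherently directed. -/
def PendantDone (pos : Fin 4 → Option Bool) : Prop :=
  (pos 1 = some true ∧ pos 3 = some true ∧ pos 2 = some false) ∨
  (pos 1 = some false ∧ pos 3 = some false ∧ pos 2 = some true)

/-- The player to move has a winning strategy (legal moves direct undirected edges without
creating a sink or source; a move completing the cycle cell wins immediately; otherwise the
last player able to move wins). -/
def Wins {E : Type} [Fintype E] [DecidableEq E]
    (legal done : (E → Option Bool) → Prop) (pos : E → Option Bool) : Prop :=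
  ∃ (e : E) (b : Bool) (_ : pos e = none),
    legal (Function.update pos e (some b)) ∧
    (done (Function.update pos e (some b)) ∨
      ¬ Wins legal done (Function.update pos e (some b)))
termination_by (Finset.univ.filter fun e => pos e = none).card
decreasing_by
  rename_i h
  apply Finset.card_lt_card
  rw [Finset.ssubset_def]
  constructor
  · intro x hx
    simp only [Finset.mem_filter, Finset.mem_univ, true_and] at *
    by_cases hx' : x = e
    · subst hx'; simp [Function.update_self] at hx
    · rwa [Function.update_of_ne hx'] at hx
  · intro hsub
    have := hsub (Finset.mem_filter.mpr ⟨Finset.mem_univ e, h⟩)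
    simp [Function.update_self] at this

/-- On the 4-edge board consisting of the triangle `bcd` with a pendant edge `ab`:
after Player 1 opens with the move `c → d`, the pendant edge `ab` is unmarkable (either
direction would make the degree-1 vertex `a` a sink or a source), and Player 1 has a
winning strategy — a counterexample to the parity conjecture (that Player 2 wins every
gameboard with an even number of edges) for boards with a degree-1 vertex. -/
theorem pendant_triangle_player_one_wins :
    (∀ bo : Bool,
      ¬ PendantLegal (Function.update
        (Function.update (fun _ => none) (3 : Fin 4) (some true)) (0 : Fin 4) (some bo))) ∧
    Wins PendantLegal PendantDone (fun _ => none) := by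
  constructor
  · intro bo h
    rcases h with ⟨h1, h2, -⟩
    cases bo
    · exact h1 (by simp [Function.update])
    · exact h2 (by simp [Function.update])
  · rw [Wins]
    refine ⟨3, true, rfl, ?_, Or.inr ?_⟩
    · simp [PendantLegal, Function.update]
    · rw [Wins]
      rintro ⟨e, b, he, hleg, hdone⟩
      fin_cases e <;> cases b <;>
        simp_all [PendantLegal, PendantDone, Function.update]
      · refine hdone ?_
        rw [Wins]
        refine ⟨2, false, by simp [Function.update], ?_, Or.inl ?_⟩
        · simp [PendantLegal, Function.update]
        · simp [PendantDone, Function.update]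
      · refine hdone ?_
        rw [Wins]
        refine ⟨1, true, by simp [Function.update], ?_, Or.inl ?_⟩
        · simp [PendantLegal, Function.update]
        · simp [PendantDone, Function.update]
end
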